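/- If G is a connected topological group generated by a compact neighborhood of the identity and Γ ≤ G is a discrete subgroup with G/Γ compact, then Γ is finitely generated. -/

import Mathlib

open Set Topology Filter Pointwise

/-- A compact set meets a discrete subgroup in a finite set. -/
lemma finite_compact_inter_discrete
    {G : Type*} [Group G] [TopologicalSpace G] [IsTopologicalGroup G]
    (Γ : Subgroup G) [DiscreteTopology Γ]
    {K : Set G} (hK : IsCompact K) : (K ∩ Γ).Finite := by
  obtain ⟨U, hUopen, hU⟩ : ∃ U, IsOpen U ∧ (Subtype.val ⁻¹' U : Set Γ) = {1} :=
    isOpen_induced_iff.mp (isOpen_discrete ({1} : Set Γ))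
  have h1U : (1 : G) ∈ U := by
    have : (1 : Γ) ∈ (Subtype.val ⁻¹' U : Set Γ) := by rw [hU]; rfl
    exact this
  obtain ⟨V, hV, hsplit⟩ := exists_nhds_split_inv (hUopen.mem_nhds h1U)
  have hcov : K ⊆ ⋃ x ∈ K, {y : G | y * x⁻¹ ∈ interior V} := by
    intro x hx
    refine mem_biUnion hx ?_
    simp only [mem_setOf_eq, mul_inv_cancel]
    exact mem_interior_iff_mem_nhds.mpr hV
  obtain ⟨t, htK, htfin, ht⟩ := hK.elim_finite_subcover_image
    (fun x _ => (isOpen_interior.preimage (continuous_mul_right x⁻¹))) hcov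
  have hsub : ∀ x ∈ t, ({y : G | y * x⁻¹ ∈ interior V} ∩ Γ).Subsingleton := by
    intro x _ a ha b hb
    have hab : a * b⁻¹ ∈ U := by
      have : (a * x⁻¹) / (b * x⁻¹) ∈ U :=
        hsplit _ (interior_subset ha.1) _ (interior_subset hb.1)
      simpa [div_eq_mul_inv, mul_assoc] using this
    have habΓ : a * b⁻¹ ∈ Γ := mul_mem ha.2 (inv_mem hb.2)
    have h1 : (⟨a * b⁻¹, habΓ⟩ : Γ) ∈ (Subtype.val ⁻¹' U : Set Γ) := hab
    rw [hU] at h1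
    have : a * b⁻¹ = 1 := congrArg Subtype.val h1
    exact mul_inv_eq_one.mp this
  have hss : K ∩ Γ ⊆ ⋃ x ∈ t, ({y : G | y * x⁻¹ ∈ interior V} ∩ Γ) := by
    intro y hy
    obtain ⟨x, hx, hyx⟩ := mem_iUnion₂.mp (ht hy.1)
    exact mem_biUnion hx ⟨hyx, hy.2⟩
  exact Finite.subset (htfin.biUnion' (fun x hx => (hsub x hx).finite)) hss

/-- A discrete cocompact subgroup of a connected locally compact topological
group is finitely generated. -/
theorem fg_of_discrete_cocompact
    {G : Type*} [Group G] [TopologicalSpace G] [IsTopologicalGroup G]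
    [ConnectedSpace G] [LocallyCompactSpace G]
    (Γ : Subgroup G) [DiscreteTopology Γ]
    (h : CompactSpace (G ⧸ Γ)) :
    Group.FG Γ := by
  classical
  set π : G → G ⧸ Γ := QuotientGroup.mk with hπ
  have hπopen : IsOpenMap π := QuotientGroup.isOpenMap_coe
  have hπsurj : Function.Surjective π := QuotientGroup.mk_surjective
  have hqc : IsCompact (univ : Set (G ⧸ Γ)) := isCompact_univ
  choose C hCc hCn using fun g : G => exists_compact_mem_nhds g
  have hcov : (univ : Set (G ⧸ Γ)) ⊆ ⋃ g : G, π '' interior (C g) := by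
    intro q _
    obtain ⟨g, rfl⟩ := hπsurj q
    exact mem_iUnion.mpr ⟨g, ⟨g, mem_interior_iff_mem_nhds.mpr (hCn g), rfl⟩⟩
  obtain ⟨s, hs⟩ := hqc.elim_finite_subcover _
    (fun g => hπopen _ isOpen_interior) hcov
  set U₀ : Set G := ⋃ g ∈ s, interior (C g) with hU₀
  have hU₀open : IsOpen U₀ := isOpen_biUnion (fun g _ => isOpen_interior)
  set K : Set G := insert 1 (⋃ g ∈ s, C g) with hKdef
  have hKc : IsCompact K := (s.isCompact_biUnion (fun g _ => hCc g)).insert 1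
  have h1K : (1 : G) ∈ K := mem_insert _ _
  have hU₀K : U₀ ⊆ K := by
    intro x hx
    obtain ⟨g, hg, hxg⟩ := mem_iUnion₂.mp hx
    exact mem_insert_iff.mpr (Or.inr (mem_biUnion hg (interior_subset hxg)))
  -- every g lies in U₀ γ for some γ ∈ Γ
  have hKΓ : ∀ g : G, ∃ γ ∈ Γ, g * γ⁻¹ ∈ U₀ := by
    intro g
    obtain ⟨x, hx, ⟨k, hk, hkx⟩⟩ := mem_iUnion₂.mp (hs (mem_univ (π g)))
    have hkΓ : k⁻¹ * g ∈ Γ := QuotientGroup.eq.mp hkx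
    refine ⟨k⁻¹ * g, hkΓ, ?_⟩
    have : g * (k⁻¹ * g)⁻¹ = k := by group
    rw [this]
    exact mem_biUnion hx hk
  -- symmetric compact neighborhood W of 1
  obtain ⟨V, hVc, hVn⟩ := exists_compact_mem_nhds (1 : G)
  set W : Set G := V ∪ V⁻¹ with hWdef
  have hWc : IsCompact W := hVc.union hVc.inv
  have hWn : W ∈ 𝓝 (1 : G) := Filter.mem_of_superset hVn subset_union_left
  have hWsymm : W⁻¹ = W := by
    ext x; simp only [hWdef, Set.mem_inv, Set.mem_union, Set.mem_inv, inv_inv]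
    tauto
  -- W generates G
  have hWgen : Subgroup.closure W = ⊤ := by
    have hopen : IsOpen ((Subgroup.closure W : Subgroup G) : Set G) :=
      Subgroup.isOpen_of_mem_nhds _ (Filter.mem_of_superset hWn Subgroup.subset_closure)
    have hclosed : IsClosed ((Subgroup.closure W : Subgroup G) : Set G) :=
      Subgroup.isClosed_of_isOpen _ hopen
    have : ((Subgroup.closure W : Subgroup G) : Set G) = univ :=
      (isClopen_iff.mp ⟨hclosed, hopen⟩).resolve_left
        (Nonempty.ne_empty ⟨1, one_mem _⟩)
    exact Subgroup.coe_eq_univ.mp this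
  -- finite F ⊆ Γ with W * K ⊆ ⋃ γ ∈ F, U₀ γ
  have hWKc : IsCompact (W * K) := hWc.mul hKc
  have hWKcov : W * K ⊆ ⋃ γ : Γ, {y : G | y * (γ : G)⁻¹ ∈ U₀} := by
    intro x _
    obtain ⟨γ, hγ, hx⟩ := hKΓ x
    exact mem_iUnion.mpr ⟨⟨γ, hγ⟩, hx⟩
  obtain ⟨T, hT⟩ := hWKc.elim_finite_subcover _
    (fun γ : Γ => hU₀open.preimage (continuous_mul_right _)) hWKcov
  -- the candidate generating set
  set S : Set G := (T.image (Subtype.val : Γ → G) : Set G) ∪ (K ∩ Γ) with hSdef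
  have hSfin : S.Finite := (T.image _).finite_toSet.union
    (finite_compact_inter_discrete Γ hKc)
  have hSΓ : S ⊆ (Γ : Set G) := by
    rintro x (hx | hx)
    · obtain ⟨γ, -, rfl⟩ := Finset.mem_image.mp (by exact_mod_cast hx)
      exact γ.2
    · exact hx.2
  -- key induction: every product of elements of W is k * δ with k ∈ K, δ ∈ closure S
  have key : ∀ l : List G, (∀ x ∈ l, x ∈ W) →
      ∃ k ∈ K, ∃ δ ∈ Subgroup.closure S, l.prod = k * δ := by
    intro l
    induction l with
    | nil => exact fun _ => ⟨1, h1K, 1, one_mem _, by simp⟩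
    | cons w l ih =>
      intro hl
      obtain ⟨k, hk, δ, hδ, heq⟩ := ih (fun x hx => hl x (List.mem_cons_of_mem _ hx))
      have hwW : w ∈ W := hl w List.mem_cons_self
      have hwk : w * k ∈ W * K := mul_mem_mul hwW hk
      obtain ⟨γ, hγT, hγ⟩ := mem_iUnion₂.mp (hT hwk)
      refine ⟨(w * k) * (γ : G)⁻¹, hU₀K hγ, (γ : G) * δ, ?_, ?_⟩
      · refine mul_mem (Subgroup.subset_closure ?_) hδ
        exact Or.inl (by exact_mod_cast Finset.mem_image_of_mem Subtype.val hγT)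
      · rw [List.prod_cons, heq]; group
  -- conclude
  rw [Group.fg_iff_subgroup_fg, Subgroup.fg_iff]
  refine ⟨S, le_antisymm ((Subgroup.closure_le Γ).mpr hSΓ) ?_, hSfin⟩
  intro γ hγ
  -- γ ∈ closure W viewed as submonoid closure of W ∪ W⁻¹
  have hγW : γ ∈ Submonoid.closure (W ∪ W⁻¹) := by
    rw [← Subgroup.closure_toSubmonoid]
    exact (by rw [hWgen]; trivial : γ ∈ Subgroup.closure W)
  obtain ⟨l, hl, hlprod⟩ := Submonoid.exists_list_of_mem_closure hγW
  have hlW : ∀ x ∈ l, x ∈ W := by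
    intro x hx
    rcases hl x hx with h' | h'
    · exact h'
    · rw [← hWsymm]; exact h'
  obtain ⟨k, hk, δ, hδ, heq⟩ := key l hlW
  have hδΓ : δ ∈ Γ := (Subgroup.closure_le Γ).mpr hSΓ hδ
  have hkΓ : k ∈ (Γ : Set G) := by
    have : k = γ * δ⁻¹ := by rw [← hlprod, heq]; group
    rw [this]; exact mul_mem hγ (inv_mem hδΓ)
  have hkS : k ∈ Subgroup.closure S :=
    Subgroup.subset_closure (Or.inr ⟨hk, hkΓ⟩)
  have : γ = k * δ := by rw [← hlprod, heq]
  rw [this]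
  exact mul_mem hkS hδ
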